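/- The infimum of E^Q[M_0] over all Q-supermartingales (M_t)_{t=0}^n for which there exists a P-supermartingale (N_t)_{t=0}^n with N_0 = 0 a.s. and max_{t=1,…,n} ( l(M_t − S_t) − α_t ) ≤ N_n a.s., equals the infimum of E^Q[M_0] over all Q-supermartingales (M_k)_{k=0}^n satisfying the lookback constraint E^P[ max_{k=1,…,n} ( l(M_k − S_k) − α_k ) ] ≤ 0. -/

import Mathlib

open MeasureTheory Filter
open scoped MeasureTheory

/-! Fix `M` and let `X` be the lookback maximum `max_{1 ≤ k ≤ n} (l(M_k - S_k) - α_k)`; the two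
sets are equal because each constraint on `M` is equivalent to `E^P[X] ≤ 0`. If a
`P`-supermartingale `N` with `N_0 = 0` dominates `X`, then `E^P[X] ≤ E^P[N_n] ≤ E^P[N_0] = 0`.
Conversely, `N_k := E^P[X - E^P[X|𝓕_0] | 𝓕_k]` is a martingale with `N_0 = 0` and
`N_n = X - E^P[X|𝓕_0] ≥ X`, since on the trivial σ-algebra `𝓕_0` the conditional expectation
`E^P[X|𝓕_0]` is a.s. nonpositive when `E^P[X] ≤ 0`. -/

/-- A supermartingale (under measure `μ`) on the discrete time interval `{a,…,b}`. -/
def IsSupermartingaleOn {Ω : Type*} {m0 : MeasurableSpace Ω}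
    (𝓕 : MeasureTheory.Filtration ℕ m0) (μ : Measure Ω)
    (M : ℕ → Ω → ℝ) (a b : ℕ) : Prop :=
  (∀ k, a ≤ k → k ≤ b → StronglyMeasurable[𝓕 k] (M k)) ∧
  (∀ k, a ≤ k → k ≤ b → Integrable (M k) μ) ∧
  (∀ k, a ≤ k → k < b → (μ[M (k + 1)|𝓕 k]) ≤ᵐ[μ] M k)

section

variable {Ω : Type*} {m0 : MeasurableSpace Ω}

theorem Finset.integrable_sup' {ι : Type*} {μ : Measure Ω} {s : Finset ι} (hs : s.Nonempty)
    {f : ι → Ω → ℝ} (hf : ∀ i ∈ s, Integrable (f i) μ) :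
    Integrable (fun ω => s.sup' hs fun i => f i ω) μ := by
  simp_rw [← Finset.sup'_apply]
  exact Finset.sup'_induction hs f (p := fun g => Integrable g μ) (fun _ h₁ _ h₂ => h₁.sup h₂) hf

theorem Finset.measurable_sup'_apply {ι : Type*} {s : Finset ι} (hs : s.Nonempty)
    {f : ι → Ω → ℝ} (hf : ∀ i ∈ s, Measurable (f i)) :
    Measurable (fun ω => s.sup' hs fun i => f i ω) := by
  simp_rw [← Finset.sup'_apply]
  exact Finset.measurable_sup' hs hf

theorem MeasureTheory.Supermartingale.isSupermartingaleOn {μ : Measure Ω} {𝓕 : Filtration ℕ m0}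
    {M : ℕ → Ω → ℝ} (hM : Supermartingale M 𝓕 μ) (a b : ℕ) :
    IsSupermartingaleOn 𝓕 μ M a b :=
  ⟨fun k _ _ => hM.1 k, fun k _ _ => hM.2.2 k, fun k _ _ => hM.2.1 k (k + 1) k.le_succ⟩

theorem IsSupermartingaleOn.integral_le {μ : Measure Ω} [IsFiniteMeasure μ]
    {𝓕 : Filtration ℕ m0} {M : ℕ → Ω → ℝ} {a b : ℕ} (hM : IsSupermartingaleOn 𝓕 μ M a b)
    {i j : ℕ} (hai : a ≤ i) (hij : i ≤ j) (hjb : j ≤ b) :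
    ∫ ω, M j ω ∂μ ≤ ∫ ω, M i ω ∂μ := by
  induction j, hij using Nat.le_induction with
  | base => exact le_rfl
  | succ j hij ih =>
    have hjb' : j < b := hjb
    calc ∫ ω, M (j + 1) ω ∂μ = ∫ ω, (μ[M (j + 1)|𝓕 j]) ω ∂μ := (integral_condExp (𝓕.le j)).symm
      _ ≤ ∫ ω, M j ω ∂μ := integral_mono_ae integrable_condExp
          (hM.2.1 j (hai.trans hij) hjb'.le) (hM.2.2 j (hai.trans hij) hjb')
      _ ≤ ∫ ω, M i ω ∂μ := ih hjb'.le

theorem ae_nonpos_of_integral_nonpos_of_trivial {m : MeasurableSpace Ω} {μ : Measure[m0] Ω}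
    [IsProbabilityMeasure μ] (hm : m ≤ m0)
    (htriv : ∀ s : Set Ω, MeasurableSet[m] s → μ s = 0 ∨ μ s = 1) {Y : Ω → ℝ}
    (hY : Measurable[m] Y) (hYint : Integrable Y μ) (hY_nonpos : ∫ ω, Y ω ∂μ ≤ 0) :
    Y ≤ᵐ[μ] 0 := by
  have hs : MeasurableSet[m] {ω | 0 < Y ω} := hY measurableSet_Ioi
  rcases htriv _ hs with hzero | hone
  · filter_upwards [measure_eq_zero_iff_ae_notMem.mp hzero] with ω hω
    exact not_lt.mp hω
  · have hpos : ∀ᵐ ω ∂μ, 0 < Y ω := mem_ae_iff.mpr ((prob_compl_eq_zero_iff (hm _ hs)).mpr hone)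
    have : 0 < ∫ ω, Y ω ∂μ := by
      rw [integral_pos_iff_support_of_nonneg_ae (hpos.mono fun _ h => h.le) hYint]
      exact (hone ▸ one_pos).trans_le (measure_mono fun ω (hω : 0 < Y ω) => hω.ne')
    linarith

section DominatingSupermartingale

variable {P : Measure Ω} {𝓕 : Filtration ℕ m0} {n : ℕ} {X : Ω → ℝ}

theorem integral_nonpos_of_le_supermartingale [IsFiniteMeasure P] {N : ℕ → Ω → ℝ}
    (hN : IsSupermartingaleOn 𝓕 P N 0 n) (hN0 : N 0 =ᵐ[P] fun _ => 0) (hXint : Integrable X P)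
    (hXN : X ≤ᵐ[P] N n) :
    ∫ ω, X ω ∂P ≤ 0 :=
  calc ∫ ω, X ω ∂P ≤ ∫ ω, N n ω ∂P := integral_mono_ae hXint (hN.2.1 n n.zero_le le_rfl) hXN
    _ ≤ ∫ ω, N 0 ω ∂P := hN.integral_le le_rfl n.zero_le le_rfl
    _ = 0 := by rw [integral_congr_ae hN0, integral_zero]

theorem exists_supermartingale_ge_of_integral_nonpos [IsProbabilityMeasure P]
    (htriv : ∀ s : Set Ω, MeasurableSet[𝓕 0] s → P s = 0 ∨ P s = 1)
    (hX : StronglyMeasurable[𝓕 n] X) (hXint : Integrable X P) (hX_nonpos : ∫ ω, X ω ∂P ≤ 0) :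
    ∃ N : ℕ → Ω → ℝ, IsSupermartingaleOn 𝓕 P N 0 n ∧ (N 0 =ᵐ[P] fun _ => 0) ∧ X ≤ᵐ[P] N n := by
  set Y := P[X|𝓕 0]
  have hY : StronglyMeasurable[𝓕 0] Y := stronglyMeasurable_condExp
  have hY_nonpos : Y ≤ᵐ[P] 0 :=
    ae_nonpos_of_integral_nonpos_of_trivial (𝓕.le 0) htriv hY.measurable integrable_condExp
      ((integral_condExp (𝓕.le 0)).trans_le hX_nonpos)
  have hXY : P[X - Y|𝓕 n] = X - Y :=
    condExp_of_stronglyMeasurable (𝓕.le n) (hX.sub (hY.mono (𝓕.mono n.zero_le)))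
      (hXint.sub integrable_condExp)
  refine ⟨fun k => P[X - Y|𝓕 k],
    (martingale_condExp (X - Y) 𝓕 P).supermartingale.isSupermartingaleOn 0 n, ?_, ?_⟩
  · have hY0 : P[Y|𝓕 0] = Y := condExp_of_stronglyMeasurable (𝓕.le 0) hY integrable_condExp
    filter_upwards [condExp_sub hXint (integrable_condExp : Integrable Y P) (𝓕 0)] with ω hω
    simp [hω, hY0, Y]
  · simp only [hXY]
    filter_upwards [hY_nonpos] with ω hω
    simp only [Pi.sub_apply, Pi.zero_apply] at hω ⊢
    linarith

end DominatingSupermartingale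

section Lookback

variable {𝓕 : Filtration ℕ m0} {l : ℝ → ℝ} {M S : ℕ → Ω → ℝ} {α : ℕ → ℝ} {n : ℕ}

theorem integrable_lookback {P : Measure Ω} [IsFiniteMeasure P] (hn : 1 ≤ n)
    (hint : ∀ k, 1 ≤ k → k ≤ n → Integrable (fun ω => l (M k ω - S k ω)) P) :
    Integrable (fun ω => (Finset.Icc 1 n).sup' (Finset.nonempty_Icc.mpr hn)
      (fun k => l (M k ω - S k ω) - α k)) P :=
  Finset.integrable_sup' _ fun k hk =>
    (hint k (Finset.mem_Icc.mp hk).1 (Finset.mem_Icc.mp hk).2).sub (integrable_const _)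

theorem stronglyMeasurable_lookback (hn : 1 ≤ n) (hl : Antitone l)
    (hM : ∀ k ≤ n, StronglyMeasurable[𝓕 k] (M k)) (hS : Adapted 𝓕 S) :
    StronglyMeasurable[𝓕 n] (fun ω => (Finset.Icc 1 n).sup' (Finset.nonempty_Icc.mpr hn)
      (fun k => l (M k ω - S k ω) - α k)) := by
  refine (Finset.measurable_sup'_apply _ fun k hk => ?_).stronglyMeasurable
  have hkn : k ≤ n := (Finset.mem_Icc.mp hk).2
  have hMk : Measurable[𝓕 n] (M k) := ((hM k hkn).mono (𝓕.mono hkn)).measurable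
  have hSk : Measurable[𝓕 n] (S k) := (hS k).mono (𝓕.mono hkn) le_rfl
  exact (hl.measurable.comp (hMk.sub hSk)).sub_const _

end Lookback

end

theorem stmt_11_general
    {Ω : Type*} {m0 : MeasurableSpace Ω} (P Q : Measure Ω)
    [IsProbabilityMeasure P]
    (𝓕 : Filtration ℕ m0) (n : ℕ) (hn : 1 ≤ n)
    (htriv : ∀ s : Set Ω, MeasurableSet[𝓕 0] s → P s = 0 ∨ P s = 1)
    (l : ℝ → ℝ) (hdec : Antitone l)
    (S : ℕ → Ω → ℝ) (hS : Adapted 𝓕 S)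
    (α : ℕ → ℝ) :
    sInf {x : ℝ | ∃ M N : ℕ → Ω → ℝ,
        IsSupermartingaleOn 𝓕 Q M 0 n ∧
        (∀ k, 1 ≤ k → k ≤ n → Integrable (fun ω => l (M k ω - S k ω)) P) ∧
        IsSupermartingaleOn 𝓕 P N 0 n ∧
        (N 0 =ᵐ[P] fun _ => (0 : ℝ)) ∧
        (∀ᵐ ω ∂P, (Finset.Icc 1 n).sup' (Finset.nonempty_Icc.mpr hn)
            (fun t => l (M t ω - S t ω) - α t) ≤ N n ω) ∧
        x = ∫ ω, M 0 ω ∂Q}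
    =
    sInf {x : ℝ | ∃ M : ℕ → Ω → ℝ,
        IsSupermartingaleOn 𝓕 Q M 0 n ∧
        (∀ k, 1 ≤ k → k ≤ n → Integrable (fun ω => l (M k ω - S k ω)) P) ∧
        (∫ ω, (Finset.Icc 1 n).sup' (Finset.nonempty_Icc.mpr hn)
            (fun k => l (M k ω - S k ω) - α k) ∂P ≤ 0) ∧
        x = ∫ ω, M 0 ω ∂Q} := by
  congr 1
  ext x
  refine exists_congr fun M => ⟨?_, ?_⟩
  · rintro ⟨N, hM, hint, hN, hN0, hXN, hx⟩
    exact ⟨hM, hint, integral_nonpos_of_le_supermartingale hN hN0 (integrable_lookback hn hint) hXN,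
      hx⟩
  · rintro ⟨hM, hint, hX_nonpos, hx⟩
    obtain ⟨N, hN, hN0, hXN⟩ := exists_supermartingale_ge_of_integral_nonpos htriv
      (stronglyMeasurable_lookback hn hdec (fun k hk => hM.1 k k.zero_le hk) hS)
      (integrable_lookback hn hint) hX_nonpos
    exact ⟨N, hM, hint, hN, hN0, hXN, hx⟩

/-- Proposition 3.8: the infimum of `E^Q[M₀]` over `Q`-supermartingales `M` for
which there is a `P`-supermartingale `N` with `N₀ = 0` and
`max_{t=1,…,n}(l(M_t - S_t) - α_t) ≤ N_n` a.s. equals the infimum of `E^Q[M₀]`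
over `Q`-supermartingales satisfying the lookback constraint
`E^P[max_{k=1,…,n}(l(M_k - S_k) - α_k)] ≤ 0`. -/
theorem stmt_11
    {Ω : Type*} {m0 : MeasurableSpace Ω} (P Q : Measure Ω)
    [IsProbabilityMeasure P] [IsProbabilityMeasure Q]
    (hPQ : P ≪ Q) (hQP : Q ≪ P)
    (𝓕 : Filtration ℕ m0) (n : ℕ) (hn : 1 ≤ n)
    (htriv : ∀ s : Set Ω, MeasurableSet[𝓕 0] s → P s = 0 ∨ P s = 1)
    (l : ℝ → ℝ) (hconv : ConvexOn ℝ Set.univ l) (hdec : Antitone l)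
    (hbdd : ∃ c : ℝ, ∀ x : ℝ, c ≤ l x)
    (S : ℕ → Ω → ℝ) (hS : Adapted 𝓕 S) (hSint : ∀ k, Integrable (S k) Q)
    (α : ℕ → ℝ) :
    sInf {x : ℝ | ∃ M N : ℕ → Ω → ℝ,
        IsSupermartingaleOn 𝓕 Q M 0 n ∧
        (∀ k, 1 ≤ k → k ≤ n → Integrable (fun ω => l (M k ω - S k ω)) P) ∧
        IsSupermartingaleOn 𝓕 P N 0 n ∧
        (N 0 =ᵐ[P] fun _ => (0 : ℝ)) ∧
        (∀ᵐ ω ∂P, (Finset.Icc 1 n).sup' (Finset.nonempty_Icc.mpr hn)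
            (fun t => l (M t ω - S t ω) - α t) ≤ N n ω) ∧
        x = ∫ ω, M 0 ω ∂Q}
    =
    sInf {x : ℝ | ∃ M : ℕ → Ω → ℝ,
        IsSupermartingaleOn 𝓕 Q M 0 n ∧
        (∀ k, 1 ≤ k → k ≤ n → Integrable (fun ω => l (M k ω - S k ω)) P) ∧
        (∫ ω, (Finset.Icc 1 n).sup' (Finset.nonempty_Icc.mpr hn)
            (fun k => l (M k ω - S k ω) - α k) ∂P ≤ 0) ∧
        x = ∫ ω, M 0 ω ∂Q} :=
  stmt_11_general P Q 𝓕 n hn htriv l hdec S hS α
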